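/- For every a ∈ ℝ, μ ∈ ℝ and σ > 0, setting r = (μ − a)/σ and ξ(r) = erf(r/√2) + 1, the variance of the left-truncated Gaussian distribution on [a, ∞) with parameters μ, σ equals σ²·(1 − (√(2π)·r·e^{r²/2}·ξ(r) + 2) / (π·e^{r²}·ξ(r)²)). -/

import Mathlib

open MeasureTheory Real Filter Set

/-- The error function. -/
noncomputable def erf (x : ℝ) : ℝ :=
  (2 / Real.sqrt Real.pi) * ∫ t in (0:ℝ)..x, Real.exp (-t ^ 2)

/-- `ξ(r) = erf(r/√2) + 1`. -/
noncomputable def xi (r : ℝ) : ℝ := erf (r / Real.sqrt 2) + 1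

/-- Normalizing constant of the left-truncated Gaussian on `[a, ∞)` with parameters `μ, σ`. -/
noncomputable def lZ (a μ σ : ℝ) : ℝ :=
  ∫ x in Set.Ici a, Real.exp (-(x - μ) ^ 2 / (2 * σ ^ 2))

/-- Mean of the left-truncated Gaussian on `[a, ∞)` with parameters `μ, σ`. -/
noncomputable def lMean (a μ σ : ℝ) : ℝ :=
  (∫ x in Set.Ici a, x * Real.exp (-(x - μ) ^ 2 / (2 * σ ^ 2))) / lZ a μ σ

/-- Variance of the left-truncated Gaussian on `[a, ∞)` with parameters `μ, σ`. -/
noncomputable def lVar (a μ σ : ℝ) : ℝ :=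
  (∫ x in Set.Ici a, (x - lMean a μ σ) ^ 2 * Real.exp (-(x - μ) ^ 2 / (2 * σ ^ 2))) / lZ a μ σ

/-!
Write `φ x = exp (-(x - μ) ^ 2 / (2 * σ ^ 2))`. The integrals `∫_a^∞ (x - μ) ^ k φ x` for
`k = 0, 1, 2` all come from the fundamental theorem of calculus on `[a, ∞)`:
`σ √(π / 2) erf ((x - μ) / (σ √2))` is an antiderivative of `φ`, `-σ² φ` one of `(x - μ) φ`, and
`-σ² (x - μ) φ` gives `∫ (x - μ)² φ = σ² ∫ φ + σ² (a - μ) φ a`; in the last two cases integrability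
of the antiderivative and of its derivative forces the boundary term at `∞` to vanish.
Expanding `(x - m)²` around `μ`, the variance is `σ² (1 + (a - μ) φ a / Z - σ² (φ a)² / Z²)` with
`Z = σ √(2π) ξ(r) / 2`, and `a - μ = -r σ`, `φ a = exp (-r² / 2)` turn this into Form I.
-/

open Topology

theorem integral_Ioi_of_hasDerivAt_of_integrableOn {E : Type*} [NormedAddCommGroup E]
    [NormedSpace ℝ E] [CompleteSpace E] {f f' : ℝ → E} {a : ℝ}
    (hderiv : ∀ x ∈ Ici a, HasDerivAt f (f' x) x) (hf : IntegrableOn f (Ioi a))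
    (hf' : IntegrableOn f' (Ioi a)) : ∫ x in Ioi a, f' x = -f a := by
  have hlim := tendsto_zero_of_hasDerivAt_of_integrableOn_Ioi
    (fun x hx => hderiv x (mem_Ici_of_Ioi hx)) hf' hf
  rw [integral_Ioi_of_hasDerivAt_of_tendsto' hderiv hf' hlim, zero_sub]

section Moments

variable {ν : Measure ℝ} {w : ℝ → ℝ}

theorem integral_mul_eq_mul_integral_add_integral_sub_mul (c : ℝ) (h₀ : Integrable w ν)
    (h₁ : Integrable (fun x => (x - c) * w x) ν) :
    ∫ x, x * w x ∂ν = c * ∫ x, w x ∂ν + ∫ x, (x - c) * w x ∂ν := by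
  rw [← integral_const_mul, ← integral_add (h₀.const_mul c) h₁]
  congr 1 with x
  ring

theorem integral_sub_sq_mul_eq (c m : ℝ) (h₀ : Integrable w ν)
    (h₁ : Integrable (fun x => (x - c) * w x) ν) (h₂ : Integrable (fun x => (x - c) ^ 2 * w x) ν) :
    ∫ x, (x - m) ^ 2 * w x ∂ν = ∫ x, (x - c) ^ 2 * w x ∂ν -
      2 * (m - c) * ∫ x, (x - c) * w x ∂ν + (m - c) ^ 2 * ∫ x, w x ∂ν := by
  calc ∫ x, (x - m) ^ 2 * w x ∂ν
      = ∫ x, ((x - c) ^ 2 * w x - 2 * (m - c) * ((x - c) * w x)) + (m - c) ^ 2 * w x ∂ν := by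
        congr 1 with x
        ring
    _ = _ := by
      have h₂₁ : Integrable (fun x => (x - c) ^ 2 * w x - 2 * (m - c) * ((x - c) * w x)) ν :=
        h₂.sub (h₁.const_mul _)
      rw [integral_add h₂₁ (h₀.const_mul _),
        integral_sub h₂ (h₁.const_mul _), integral_const_mul, integral_const_mul]

end Moments

theorem erf_neg (x : ℝ) : erf (-x) = -erf x := by
  have h := intervalIntegral.integral_comp_neg (a := 0) (b := x) fun t => exp (-t ^ 2)
  simp only [neg_sq, neg_zero] at h
  rw [erf, erf, intervalIntegral.integral_symm, h]
  ring

theorem hasDerivAt_erf (x : ℝ) : HasDerivAt erf (2 / √π * exp (-x ^ 2)) x :=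
  (((continuous_pow 2).neg.rexp.integral_hasStrictDerivAt 0 x).hasDerivAt).const_mul _

theorem tendsto_erf_atTop : Tendsto erf atTop (𝓝 1) := by
  have half : ∫ x in Ioi 0, exp (-x ^ 2) = √π / 2 := by
    simpa using integral_gaussian_Ioi 1
  have h := intervalIntegral_tendsto_integral_Ioi 0
    (integrable_exp_neg_mul_sq one_pos).integrableOn tendsto_id
  simp only [neg_one_mul, half] at h
  convert h.const_mul (2 / √π) using 1
  · rfl
  · field_simp [(sqrt_pos.2 pi_pos).ne']

noncomputable def gaussKernel (μ σ x : ℝ) : ℝ := exp (-(x - μ) ^ 2 / (2 * σ ^ 2))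

section gaussKernel

variable {μ σ : ℝ}

theorem gaussKernel_pos (x : ℝ) : 0 < gaussKernel μ σ x :=
  exp_pos _

theorem hasDerivAt_gaussKernel (x : ℝ) :
    HasDerivAt (gaussKernel μ σ) (-(x - μ) / σ ^ 2 * gaussKernel μ σ x) x := by
  have h : HasDerivAt (fun x => -(x - μ) ^ 2 / (2 * σ ^ 2)) (-(2 * (x - μ)) / (2 * σ ^ 2)) x := by
    simpa using (((hasDerivAt_id x).sub_const μ).fun_pow 2).neg.div_const (2 * σ ^ 2)
  exact h.exp.congr_deriv (by rw [gaussKernel]; ring)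

theorem integrable_sub_pow_mul_gaussKernel (hσ : σ ≠ 0) (n : ℕ) :
    Integrable fun x => (x - μ) ^ n * gaussKernel μ σ x := by
  have hb : 0 < (2 * σ ^ 2)⁻¹ := by positivity
  have hn : (-1 : ℝ) < n := neg_one_lt_zero.trans_le n.cast_nonneg
  refine ((integrable_rpow_mul_exp_neg_mul_sq hb hn).comp_sub_right μ).congr
    (ae_of_all _ fun x => ?_)
  simp only [rpow_natCast, gaussKernel]
  ring_nf

theorem integrable_gaussKernel (hσ : σ ≠ 0) : Integrable (gaussKernel μ σ) := by
  simpa using integrable_sub_pow_mul_gaussKernel (μ := μ) hσ 0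

theorem integral_Ioi_gaussKernel (hσ : 0 < σ) (a : ℝ) :
    ∫ x in Ioi a, gaussKernel μ σ x = σ * √(2 * π) / 2 * xi ((μ - a) / σ) := by
  set s := σ * √2
  have hs : 0 < s := by positivity
  have hsq : s ^ 2 = 2 * σ ^ 2 := by rw [mul_pow, sq_sqrt zero_le_two]; ring
  have hc : σ * √(2 * π) / 2 = s * √π / 2 := by rw [sqrt_mul zero_le_two]; ring
  have hderiv : ∀ x ∈ Ici a, HasDerivAt (fun x => s * √π / 2 * erf ((x - μ) / s))
      (gaussKernel μ σ x) x := by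
    intro x _
    have h := ((hasDerivAt_erf _).comp x (((hasDerivAt_id x).sub_const μ).div_const s)).const_mul
      (s * √π / 2)
    refine h.congr_deriv ?_
    rw [gaussKernel, div_pow, hsq]
    field_simp [(sqrt_pos.2 pi_pos).ne']
    simp
  have hshift : Tendsto (fun x => x - μ) atTop atTop :=
    tendsto_atTop_add_const_right atTop (-μ) tendsto_id
  have hlim : Tendsto (fun x => s * √π / 2 * erf ((x - μ) / s)) atTop (𝓝 (s * √π / 2 * 1)) :=
    (tendsto_erf_atTop.comp (hshift.atTop_div_const hs)).const_mul _
  rw [integral_Ioi_of_hasDerivAt_of_tendsto' hderiv (integrable_gaussKernel hσ.ne').integrableOn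
    hlim, hc, xi, ← neg_sub a μ, neg_div, neg_div, erf_neg, div_div]
  ring

theorem integral_Ioi_sub_mul_gaussKernel (hσ : σ ≠ 0) (a : ℝ) :
    ∫ x in Ioi a, (x - μ) * gaussKernel μ σ x = σ ^ 2 * gaussKernel μ σ a := by
  have hderiv : ∀ x ∈ Ici a, HasDerivAt (fun x => -σ ^ 2 * gaussKernel μ σ x)
      ((x - μ) * gaussKernel μ σ x) x := fun x _ =>
    ((hasDerivAt_gaussKernel x).const_mul _).congr_deriv (by field_simp)
  rw [integral_Ioi_of_hasDerivAt_of_integrableOn hderiv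
    ((integrable_gaussKernel hσ).const_mul _).integrableOn
    (by simpa using (integrable_sub_pow_mul_gaussKernel hσ 1).integrableOn)]
  ring

theorem integral_Ioi_sub_pow_add_two_mul_gaussKernel (hσ : σ ≠ 0) (n : ℕ) (a : ℝ) :
    ∫ x in Ioi a, (x - μ) ^ (n + 2) * gaussKernel μ σ x =
      σ ^ 2 * (a - μ) ^ (n + 1) * gaussKernel μ σ a +
        (n + 1) * σ ^ 2 * ∫ x in Ioi a, (x - μ) ^ n * gaussKernel μ σ x := by
  have hderiv : ∀ x ∈ Ici a, HasDerivAt (fun x => -σ ^ 2 * ((x - μ) ^ (n + 1) * gaussKernel μ σ x))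
      ((x - μ) ^ (n + 2) * gaussKernel μ σ x -
        (n + 1) * σ ^ 2 * ((x - μ) ^ n * gaussKernel μ σ x)) x := fun x _ =>
    (((((hasDerivAt_id x).sub_const μ).fun_pow (n + 1)).mul (hasDerivAt_gaussKernel x)).const_mul
      _).congr_deriv (by simp only [id]; push_cast; field_simp; ring)
  have hint := fun k => (integrable_sub_pow_mul_gaussKernel (μ := μ) hσ k).integrableOn (s := Ioi a)
  have h := integral_Ioi_of_hasDerivAt_of_integrableOn hderiv ((hint _).const_mul _)
    ((hint _).sub ((hint _).const_mul _))
  rw [integral_sub (hint _) ((hint _).const_mul _), integral_const_mul] at h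
  linear_combination h

end gaussKernel

section TruncatedGaussian

variable {a μ σ : ℝ}

theorem lZ_eq_integral_Ioi : lZ a μ σ = ∫ x in Ioi a, gaussKernel μ σ x :=
  integral_Ici_eq_integral_Ioi

theorem lZ_pos (hσ : σ ≠ 0) : 0 < lZ a μ σ := by
  rw [lZ_eq_integral_Ioi, setIntegral_pos_iff_support_of_nonneg_ae
    (ae_of_all _ fun x => (gaussKernel_pos x).le) (integrable_gaussKernel hσ).integrableOn]
  have : Function.support (gaussKernel μ σ) = univ := by
    ext x
    simp [gaussKernel, exp_ne_zero]
  simp [this]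

theorem lZ_eq (hσ : 0 < σ) : lZ a μ σ = σ * √(2 * π) / 2 * xi ((μ - a) / σ) := by
  rw [lZ_eq_integral_Ioi, integral_Ioi_gaussKernel hσ]

theorem lMean_eq_integral_Ioi :
    lMean a μ σ = (∫ x in Ioi a, x * gaussKernel μ σ x) / lZ a μ σ := by
  rw [lMean, integral_Ici_eq_integral_Ioi]
  rfl

theorem lVar_eq_integral_Ioi :
    lVar a μ σ = (∫ x in Ioi a, (x - lMean a μ σ) ^ 2 * gaussKernel μ σ x) / lZ a μ σ := by
  rw [lVar, integral_Ici_eq_integral_Ioi]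
  rfl

theorem lMean_eq (hσ : σ ≠ 0) : lMean a μ σ = μ + σ ^ 2 * gaussKernel μ σ a / lZ a μ σ := by
  have h₁ := (integrable_sub_pow_mul_gaussKernel (μ := μ) hσ 1).integrableOn (s := Ioi a)
  simp only [pow_one] at h₁
  rw [lMean_eq_integral_Ioi, integral_mul_eq_mul_integral_add_integral_sub_mul μ
    (integrable_gaussKernel hσ).integrableOn h₁, integral_Ioi_sub_mul_gaussKernel hσ,
    ← lZ_eq_integral_Ioi]
  field_simp [(lZ_pos (a := a) (μ := μ) hσ).ne']

theorem lVar_eq (hσ : σ ≠ 0) :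
    lVar a μ σ = σ ^ 2 * (1 + (a - μ) * gaussKernel μ σ a / lZ a μ σ -
      σ ^ 2 * gaussKernel μ σ a ^ 2 / lZ a μ σ ^ 2) := by
  have hint := fun k => (integrable_sub_pow_mul_gaussKernel (μ := μ) hσ k).integrableOn (s := Ioi a)
  have h₀ := hint 0
  have h₁ := hint 1
  have h₂ := integral_Ioi_sub_pow_add_two_mul_gaussKernel (μ := μ) hσ 0 a
  simp only [pow_zero, one_mul, pow_one, zero_add, Nat.cast_zero] at h₀ h₁ h₂
  rw [lVar_eq_integral_Ioi, integral_sub_sq_mul_eq μ _ h₀ h₁ (hint 2), h₂,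
    integral_Ioi_sub_mul_gaussKernel hσ, lMean_eq hσ, ← lZ_eq_integral_Ioi]
  field_simp [(lZ_pos (a := a) (μ := μ) hσ).ne']
  ring

end TruncatedGaussian

/-- Form I of the variance of a left-truncated Gaussian, with `r = (μ − a)/σ`. -/
theorem lVar_eq_formI (a μ σ r : ℝ) (hσ : 0 < σ) (hr : r = (μ - a) / σ) :
    lVar a μ σ =
      σ ^ 2 * (1 -
        (Real.sqrt (2 * Real.pi) * r * Real.exp (r ^ 2 / 2) * xi r + 2) /
          (Real.pi * Real.exp (r ^ 2) * xi r ^ 2)) := by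
  have hZ : lZ a μ σ = σ * √(2 * π) / 2 * xi r := by rw [lZ_eq hσ, hr]
  have hξ : xi r ≠ 0 := by
    intro h
    simpa [hZ, h] using (lZ_pos (a := a) (μ := μ) hσ.ne')
  have ha : a - μ = -(r * σ) := by rw [hr]; field_simp; ring
  have hK : gaussKernel μ σ a = (exp (r ^ 2 / 2))⁻¹ := by
    rw [gaussKernel, ha, ← exp_neg]; field_simp
  have hexp : exp (r ^ 2) = exp (r ^ 2 / 2) ^ 2 := by rw [← exp_nat_mul]; ring_nf
  have hs : √(2 * π) ^ 2 = 2 * π := sq_sqrt (by positivity)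
  rw [lVar_eq hσ.ne', hZ, hK, ha, hexp]
  field_simp
  linear_combination (r * exp (r ^ 2 / 2) * √(2 * π) * xi r + 2) * hs
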